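/- Let X be a real Hilbert space, M ⊆ X a nonempty closed convex set, J : X → ℝ Fréchet differentiable, x† ∈ M, γ > 0, η ≥ 0 and τ > 1/γ. Assume ⟨∇J(x), x − x†⟩ ≥ γ‖∇J(x)‖² − η for all x ∈ M. Let (x_k)_{0 ≤ k ≤ N} ⊆ M be generated by x_{k+1} = P_M(x_k − μ_k ∇J(x_k)) with stepsizes 0 < μ̲ ≤ μ_k ≤ μ̄ < 2γ/(1 + 1/(γτ − 1)), and assume ‖∇J(x_k)‖² ≥ τη for all k ≤ N − 1. Then ∑_{k=0}^{N−1} ‖∇J(x_k)‖² ≤ (1 + 1/(γτ − 1)) ‖x_0 − x†‖² / (γ μ̲ (2 − (μ̄/γ)(1 + 1/(γτ − 1)))). -/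

import Mathlib

open RealInnerProductSpace Finset

/-!
A projection step moves no farther from any point `z ∈ M` than the unprojected gradient
step does, and expanding the gradient step shows that it decreases `‖x_k - x†‖²` by
`2 μ_k ⟪∇J(x_k), x_k - x†⟫ - μ_k² ‖∇J(x_k)‖²`. Under the combined condition and the
discrepancy bound `η ≤ ‖∇J(x_k)‖² / τ`, this decrease is at least
`μ̲ (2 (γ - 1/τ) - μ̄) ‖∇J(x_k)‖²`, and the stepsize bound says exactly that this constant
is positive, since `(1 + 1/(γτ - 1)) (γ - 1/τ) = γ`. Telescoping gives the estimate.
-/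

section InnerProductSpace

variable {X : Type*} [NormedAddCommGroup X] [InnerProductSpace ℝ X]

theorem norm_sub_sq_le_of_inner_sub_nonpos {y p z : X} (h : ⟪y - p, z - p⟫ ≤ 0) :
    ‖p - z‖ ^ 2 ≤ ‖y - z‖ ^ 2 := by
  have hsplit : y - z = (y - p) + (p - z) := by abel
  have hinner : ⟪y - p, p - z⟫ = -⟪y - p, z - p⟫ := by
    rw [← inner_neg_right, neg_sub]
  rw [hsplit, norm_add_sq_real, hinner]
  nlinarith [sq_nonneg ‖y - p‖]

theorem norm_sub_smul_sub_sq (x g z : X) (μ : ℝ) :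
    ‖(x - μ • g) - z‖ ^ 2 = ‖x - z‖ ^ 2 - 2 * μ * ⟪g, x - z⟫ + μ ^ 2 * ‖g‖ ^ 2 := by
  rw [show (x - μ • g) - z = (x - z) - μ • g by abel, norm_sub_sq_real, real_inner_smul_right,
    norm_smul, real_inner_comm, Real.norm_eq_abs, mul_pow, sq_abs]
  ring

theorem norm_projected_gradient_step_sub_sq_le {x x' g z : X} {μ : ℝ}
    (hproj : ⟪(x - μ • g) - x', z - x'⟫ ≤ 0) :
    ‖x' - z‖ ^ 2 ≤ ‖x - z‖ ^ 2 - (2 * μ * ⟪g, x - z⟫ - μ ^ 2 * ‖g‖ ^ 2) := by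
  have h := norm_sub_sq_le_of_inner_sub_nonpos hproj
  rw [norm_sub_smul_sub_sq] at h
  linarith

end InnerProductSpace

theorem mul_sum_le_of_le_sub_succ {a : ℝ} {u d : ℕ → ℝ} {N : ℕ}
    (h : ∀ k < N, a * u k ≤ d k - d (k + 1)) (hd : 0 ≤ d N) :
    a * ∑ k ∈ range N, u k ≤ d 0 := by
  calc a * ∑ k ∈ range N, u k
      ≤ ∑ k ∈ range N, (d k - d (k + 1)) := by
        rw [mul_sum]
        exact sum_le_sum fun k hk => h k (mem_range.mp hk)
    _ = d 0 - d N := sum_range_sub' d N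
    _ ≤ d 0 := by linarith

/-- The real-variable core of one descent step: `G` stands for `‖∇J(x_k)‖²` and `I` for
`⟪∇J(x_k), x_k - x†⟫`. -/
theorem descent_bound_of_combined {γ η τ μ μlo μhi G I : ℝ} (hτ : 0 < τ) (hG : 0 ≤ G)
    (hI : γ * G - η ≤ I) (hdisc : τ * η ≤ G) (hμlo : 0 < μlo) (hμ : μlo ≤ μ ∧ μ ≤ μhi)
    (hμhi : μhi ≤ 2 * (γ - 1 / τ)) :
    μlo * (2 * (γ - 1 / τ) - μhi) * G ≤ 2 * μ * I - μ ^ 2 * G := by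
  obtain ⟨hlo, hhi⟩ := hμ
  have hμ0 : 0 < μ := hμlo.trans_le hlo
  have hη : η ≤ G / τ := by rw [le_div_iff₀ hτ]; linarith
  have hcoeff : μlo * (2 * (γ - 1 / τ) - μhi) ≤ μ * (2 * (γ - 1 / τ) - μ) := by nlinarith
  calc μlo * (2 * (γ - 1 / τ) - μhi) * G
      ≤ μ * (2 * (γ - 1 / τ) - μ) * G := mul_le_mul_of_nonneg_right hcoeff hG
    _ = 2 * μ * (γ * G - G / τ) - μ ^ 2 * G := by ring
    _ ≤ 2 * μ * (γ * G - η) - μ ^ 2 * G := by gcongr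
    _ ≤ 2 * μ * I - μ ^ 2 * G := by gcongr

theorem one_add_one_div_mul_sub_one_div {γ τ : ℝ} (hγτ : 0 < γ * τ - 1) :
    (1 + 1 / (γ * τ - 1)) * (γ - 1 / τ) = γ := by
  have hτ : τ ≠ 0 := by rintro rfl; simp at hγτ; linarith
  field_simp
  ring

theorem projected_gradient_gradient_summability_combined_general
    {X : Type*} [NormedAddCommGroup X] [InnerProductSpace ℝ X] [CompleteSpace X]
    (M : Set X)
    (J : X → ℝ)
    (xdag : X) (hxdag : xdag ∈ M)
    (γ η τ : ℝ) (hγ : 0 < γ) (hτ : 1 / γ < τ)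
    (hcombined : ∀ x ∈ M,
      ⟪gradient J x, x - xdag⟫ ≥ γ * ‖gradient J x‖ ^ 2 - η)
    (N : ℕ) (x : ℕ → X) (hxM : ∀ k ≤ N, x k ∈ M)
    (μ : ℕ → ℝ) (μlo μhi : ℝ) (hμlo : 0 < μlo)
    (hμ : ∀ k < N, μlo ≤ μ k ∧ μ k ≤ μhi)
    (hμhi : μhi < 2 * γ / (1 + 1 / (γ * τ - 1)))
    (hproj : ∀ k < N, ∀ z ∈ M,
      ⟪(x k - μ k • gradient J (x k)) - x (k + 1), z - x (k + 1)⟫ ≤ 0)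
    (hdisc : ∀ k < N, ‖gradient J (x k)‖ ^ 2 ≥ τ * η) :
    ∑ k ∈ Finset.range N, ‖gradient J (x k)‖ ^ 2 ≤
      (1 + 1 / (γ * τ - 1)) * ‖x 0 - xdag‖ ^ 2 /
        (γ * μlo * (2 - (μhi / γ) * (1 + 1 / (γ * τ - 1)))) := by
  have hγτ : 0 < γ * τ - 1 := by rw [div_lt_iff₀ hγ] at hτ; linarith
  have hτ0 : 0 < τ := pos_of_mul_pos_right (by linarith : 0 < γ * τ) hγ.le
  have hc0 : 0 < 1 + 1 / (γ * τ - 1) := by positivity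
  have hc := one_add_one_div_mul_sub_one_div hγτ
  generalize 1 + 1 / (γ * τ - 1) = c at hc hc0 hμhi ⊢
  have hμhi' : μhi < 2 * (γ - 1 / τ) := by
    rw [lt_div_iff₀ hc0] at hμhi; nlinarith
  have hstep : ∀ k < N, μlo * (2 * (γ - 1 / τ) - μhi) * ‖gradient J (x k)‖ ^ 2 ≤
      ‖x k - xdag‖ ^ 2 - ‖x (k + 1) - xdag‖ ^ 2 := fun k hk => by
    have hdesc := descent_bound_of_combined hτ0 (sq_nonneg _)
      (hcombined (x k) (hxM k hk.le)) (hdisc k hk) hμlo (hμ k hk) hμhi'.le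
    linarith [norm_projected_gradient_step_sub_sq_le (hproj k hk xdag hxdag)]
  have hsum := mul_sum_le_of_le_sub_succ hstep (sq_nonneg _)
  have hden : γ * μlo * (2 - μhi / γ * c) = c * (μlo * (2 * (γ - 1 / τ) - μhi)) := by
    have hγc : μhi / γ * c * γ = μhi * c := by field_simp
    linear_combination (-μlo) * hγc - (2 * μlo) * hc
  rwa [hden, mul_div_mul_left _ _ hc0.ne', le_div_iff₀ (mul_pos hμlo (by linarith)), mul_comm]

/-- Summability estimate for the projected gradient method under the combined
convexity/stationarity condition:
`∑_{k=0}^{N-1} ‖∇J(x_k)‖² ≤ (1 + 1/(γτ-1)) ‖x_0 - x†‖² / (γ μ̲ (2 - (μ̄/γ)(1 + 1/(γτ-1))))`. -/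
theorem projected_gradient_gradient_summability_combined
    {X : Type*} [NormedAddCommGroup X] [InnerProductSpace ℝ X] [CompleteSpace X]
    (M : Set X) (hMne : M.Nonempty) (hMcl : IsClosed M) (hMconv : Convex ℝ M)
    (J : X → ℝ) (hJ : Differentiable ℝ J)
    (xdag : X) (hxdag : xdag ∈ M)
    (γ η τ : ℝ) (hγ : 0 < γ) (hη : 0 ≤ η) (hτ : 1 / γ < τ)
    (hcombined : ∀ x ∈ M,
      ⟪gradient J x, x - xdag⟫ ≥ γ * ‖gradient J x‖ ^ 2 - η)
    (N : ℕ) (x : ℕ → X) (hxM : ∀ k ≤ N, x k ∈ M)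
    (μ : ℕ → ℝ) (μlo μhi : ℝ) (hμlo : 0 < μlo)
    (hμ : ∀ k < N, μlo ≤ μ k ∧ μ k ≤ μhi)
    (hμhi : μhi < 2 * γ / (1 + 1 / (γ * τ - 1)))
    (hproj : ∀ k < N, ∀ z ∈ M,
      ⟪(x k - μ k • gradient J (x k)) - x (k + 1), z - x (k + 1)⟫ ≤ 0)
    (hdisc : ∀ k < N, ‖gradient J (x k)‖ ^ 2 ≥ τ * η) :
    ∑ k ∈ Finset.range N, ‖gradient J (x k)‖ ^ 2 ≤
      (1 + 1 / (γ * τ - 1)) * ‖x 0 - xdag‖ ^ 2 /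
        (γ * μlo * (2 - (μhi / γ) * (1 + 1 / (γ * τ - 1)))) :=
  projected_gradient_gradient_summability_combined_general M J xdag hxdag γ η τ hγ hτ hcombined N x
    hxM μ μlo μhi hμlo hμ hμhi hproj hdisc
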